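/- Let θ > 0, −1/2 < a < 0, and μ ∈ (0,1) with μ ≥ −a and 1 − μ ≥ −a. Set θ̃ = (1+a)θ and μ̃ = (2μ + a)/(2(1+a)). Then μ̃ ∈ (0,1), and for every h > 0 and x ∈ (0,1): (i) c := μ̃ + e^{−θ̃h}(x − μ̃) ∈ (0,1) and c' := μ̃ + e^{−θ̃h/2}(x − μ̃) ∈ (0,1); (ii) for every z ∈ ℝ the LT update sin²((√(−2aθ)/2)·z + arcsin(√c)) lies in [0,1]; (iii) for every z ∈ ℝ the Strang update μ̃ + e^{−θ̃h/2}(sin²((√(−2aθ)/2)·z + arcsin(√c')) − μ̃) lies in the open interval (0,1). Hence the splitting schemes preserve the state space of the Wright–Fisher diffusion when both boundaries are of entrance type. -/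

import Mathlib

/-- `μ̃ = (2μ + a)/(2(1+a))` for the Wright–Fisher splitting. -/
noncomputable def wfMuTilde (a μ : ℝ) : ℝ := (2 * μ + a) / (2 * (1 + a))

/-- `θ̃ = (1+a)θ` for the Wright–Fisher splitting. -/
noncomputable def wfThetaTilde (a θ : ℝ) : ℝ := (1 + a) * θ

/-- Exact flow `μ̃ + e^{−θ̃h}(x − μ̃)` of the deterministic Wright–Fisher subequation. -/
noncomputable def wfODE (a θ μ h x : ℝ) : ℝ :=
  wfMuTilde a μ + Real.exp (-(wfThetaTilde a θ) * h) * (x - wfMuTilde a μ)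

/-- One-step Lie–Trotter update for the Wright–Fisher diffusion with Gaussian
increment `z`: `sin²((√(−2aθ)/2) z + arcsin √(μ̃ + e^{−θ̃h}(x − μ̃)))`. -/
noncomputable def wfLT (a θ μ h x z : ℝ) : ℝ :=
  Real.sin (Real.sqrt (-2 * a * θ) / 2 * z
    + Real.arcsin (Real.sqrt (wfODE a θ μ h x))) ^ 2

/-- One-step Strang update for the Wright–Fisher diffusion with Gaussian increment `z`. -/
noncomputable def wfStrang (a θ μ h x z : ℝ) : ℝ :=
  wfMuTilde a μ
    + Real.exp (-(wfThetaTilde a θ) * h / 2) * (wfLT a θ μ (h / 2) x z - wfMuTilde a μ)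

/-!
Every update is a relaxation `m + λ (y - m)` towards the point `μ̃`, with `λ = e^{-θ̃ t} ∈ (0, 1]`,
of a point `y` of `[0, 1]`: the deterministic flows relax `x ∈ (0, 1)`, the Strang scheme relaxes a
Lie–Trotter value, which is a square of a sine. The entrance condition `min(μ, 1 - μ) ≥ -a > 0`
is exactly what puts `μ̃` inside `(0, 1)`, so the relaxation stays in `(0, 1)`; for the Strang
scheme strictness comes from `λ < 1`, since the Lie–Trotter value may reach `0` or `1`.
-/

open Set

lemma add_mul_sub_mem_Ioo {α : Type*} [CommRing α] [LinearOrder α] [IsStrictOrderedRing α]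
    {l u m y t : α} (hm : m ∈ Ioo l u) (hy : y ∈ Icc l u) (ht : t ∈ Ico 0 1) :
    m + t * (y - m) ∈ Ioo l u := by
  obtain ⟨hml, hmu⟩ := hm
  obtain ⟨hyl, hyu⟩ := hy
  obtain ⟨ht0, ht1⟩ := ht
  constructor <;> nlinarith [mul_le_mul_of_nonneg_left hyl ht0, mul_le_mul_of_nonneg_left hyu ht0]

lemma exp_neg_mul_mem_Ioc {c t : ℝ} (hc : 0 ≤ c) (ht : 0 ≤ t) : Real.exp (-c * t) ∈ Ioc 0 1 :=
  ⟨Real.exp_pos _, Real.exp_le_one_iff.mpr (by nlinarith)⟩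

lemma exp_neg_mul_mem_Ioo {c t : ℝ} (hc : 0 < c) (ht : 0 < t) : Real.exp (-c * t) ∈ Ioo 0 1 :=
  ⟨Real.exp_pos _, Real.exp_lt_one_iff.mpr (by nlinarith [mul_pos hc ht])⟩

lemma one_add_pos_of_entrance {a μ : ℝ} (hμa : -a ≤ μ) (hμa' : -a ≤ 1 - μ) : 0 < 1 + a := by
  linarith

lemma wfMuTilde_mem_Ioo {a μ : ℝ} (ha : a < 0) (hμa : -a ≤ μ) (hμa' : -a ≤ 1 - μ) :
    wfMuTilde a μ ∈ Ioo 0 1 := by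
  have hden : 0 < 2 * (1 + a) := by linarith [one_add_pos_of_entrance hμa hμa']
  exact ⟨div_pos (by linarith) hden, (div_lt_one hden).mpr (by linarith)⟩

lemma wfThetaTilde_pos {a θ μ : ℝ} (hθ : 0 < θ) (hμa : -a ≤ μ) (hμa' : -a ≤ 1 - μ) :
    0 < wfThetaTilde a θ :=
  mul_pos (one_add_pos_of_entrance hμa hμa') hθ

lemma wfODE_mem_Ioo {a θ μ h x : ℝ} (hμ : wfMuTilde a μ ∈ Ioo 0 1) (hθ : 0 ≤ wfThetaTilde a θ)
    (hh : 0 ≤ h) (hx : x ∈ Ioo 0 1) : wfODE a θ μ h x ∈ Ioo 0 1 :=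
  (convex_Ioo 0 1).add_smul_sub_mem hμ hx (Ioc_subset_Icc_self (exp_neg_mul_mem_Ioc hθ hh))

lemma wfLT_mem_Icc (a θ μ h x z : ℝ) : wfLT a θ μ h x z ∈ Icc 0 1 :=
  ⟨sq_nonneg _, Real.sin_sq_le_one _⟩

lemma wfStrang_mem_Ioo {a θ μ h : ℝ} (hμ : wfMuTilde a μ ∈ Ioo 0 1) (hθ : 0 < wfThetaTilde a θ)
    (hh : 0 < h) (x z : ℝ) : wfStrang a θ μ h x z ∈ Ioo 0 1 := by
  have hexp : Real.exp (-wfThetaTilde a θ * h / 2) ∈ Ico 0 1 := by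
    rw [mul_div_assoc]
    exact Ioo_subset_Ico_self (exp_neg_mul_mem_Ioo hθ (half_pos hh))
  exact add_mul_sub_mem_Ioo hμ (wfLT_mem_Icc a θ μ (h / 2) x z) hexp

theorem wf_splitting_state_space_preservation_general
    (θ a μ : ℝ) (hθ : 0 < θ) (ha2 : a < 0)
    (hμa : -a ≤ μ) (hμa' : -a ≤ 1 - μ) :
    (0 < wfMuTilde a μ ∧ wfMuTilde a μ < 1)
      ∧ ∀ h x : ℝ, 0 < h → 0 < x → x < 1 →
          (0 < wfODE a θ μ h x ∧ wfODE a θ μ h x < 1)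
            ∧ (0 < wfODE a θ μ (h / 2) x ∧ wfODE a θ μ (h / 2) x < 1)
            ∧ (∀ z : ℝ, wfLT a θ μ h x z ∈ Set.Icc (0 : ℝ) 1)
            ∧ (∀ z : ℝ, wfStrang a θ μ h x z ∈ Set.Ioo (0 : ℝ) 1) := by
  have hμ := wfMuTilde_mem_Ioo ha2 hμa hμa'
  have hθ' := wfThetaTilde_pos (μ := μ) hθ hμa hμa'
  refine ⟨hμ, fun h x hh hx0 hx1 => ⟨?_, ?_, fun z => wfLT_mem_Icc a θ μ h x z,
    wfStrang_mem_Ioo hμ hθ' hh x⟩⟩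
  · exact wfODE_mem_Ioo hμ hθ'.le hh.le ⟨hx0, hx1⟩
  · exact wfODE_mem_Ioo hμ hθ'.le (half_pos hh).le ⟨hx0, hx1⟩

/-- State-space preservation of the splitting schemes for the Wright–Fisher diffusion
when both boundaries are of entrance type: `μ̃ ∈ (0,1)`, the deterministic flows stay in
`(0,1)`, the Lie–Trotter update stays in `[0,1]`, and the Strang update stays in `(0,1)`. -/
theorem wf_splitting_state_space_preservation
    (θ a μ : ℝ) (hθ : 0 < θ) (ha1 : -(1 / 2) < a) (ha2 : a < 0)
    (hμ0 : 0 < μ) (hμ1 : μ < 1) (hμa : -a ≤ μ) (hμa' : -a ≤ 1 - μ) :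
    (0 < wfMuTilde a μ ∧ wfMuTilde a μ < 1)
      ∧ ∀ h x : ℝ, 0 < h → 0 < x → x < 1 →
          (0 < wfODE a θ μ h x ∧ wfODE a θ μ h x < 1)
            ∧ (0 < wfODE a θ μ (h / 2) x ∧ wfODE a θ μ (h / 2) x < 1)
            ∧ (∀ z : ℝ, wfLT a θ μ h x z ∈ Set.Icc (0 : ℝ) 1)
            ∧ (∀ z : ℝ, wfStrang a θ μ h x z ∈ Set.Ioo (0 : ℝ) 1) :=
  wf_splitting_state_space_preservation_general θ a μ hθ ha2 hμa hμa'
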